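/- (Uniqueness of the lifting.) Let 𝔨¹ be a (μ₁,λ,κ)-DAEC and 𝔨² a (μ₂,λ,κ)-DAEC, each additionally satisfying Ax III(d) and Ax IV(d), with μ₁ ≤ μ₂. If 𝔨¹ and 𝔨² agree in cardinality λ (i.e. they have the same vocabulary, the same models of cardinality λ, and ≤_{𝔨¹} and ≤_{𝔨²} agree on these), then 𝔨¹ equals the restriction of 𝔨² to models of cardinality < μ₁: K_{𝔨¹} = {M ∈ K_{𝔨²} : ‖M‖ < μ₁} and ≤_{𝔨¹} is ≤_{𝔨²} restricted to this class. -/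

import Mathlib

/-!
Fix `M ∈ K₁` with `‖M‖ < μ₁ ≤ μ₂`. Starting from a `λ`-sized `≤₁`-submodel through each point
of `M`, close under choosing `λ`-sized `≤₁`-submodels of `M` above `<κ` given ones; after `κ`
stages this gives a `κ`-directed family covering `M` with at most `‖M‖ ^< κ` members, and
`(χ ^< κ) ^< κ = χ ^< κ` keeps that count `< μ₂`. Since the classes agree in `λ`, the family is
a `≤₂`-system, so Ax III(d) of `𝔨²` gives a `≤₂`-union `M'` with the universe of `M`. Seeding
the family with any `λ`-sized `P ≤₁ M` yields, by the uniqueness in Ax III(d), the same `M'`, so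
every such `P` is `≤₂ M'`; as the arities are `≤ λ`, `M'` and `M` have the same structure, hence
`M ∈ K₂`. For `M ≤₁ N`, smoothness (Ax IV(d)) of `𝔨²` applied to the family of `M` gives
`M ≤₂ N`. The converse inclusions are the same argument with the classes exchanged.
-/

universe u

open Cardinal

/-! ### Vocabularies and models on an ambient type -/

/-- A vocabulary: function and relation symbols, each with an arity
(a type, of cardinality `≤ λ` in the classes below). -/
structure Vocab : Type (u + 1) where
  Func : Type u
  Rel : Type u
  arF : Func → Type u
  arR : Rel → Type u

/-- A `τ`-structure whose universe is a subset of a fixed ambient type `Ω`. -/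
structure ModelOn (τ : Vocab.{u}) (Ω : Type u) : Type u where
  carrier : Set Ω
  funcMap : ∀ f : τ.Func, (τ.arF f → Ω) → Ω
  relMap : ∀ r : τ.Rel, (τ.arR r → Ω) → Prop
  func_mem : ∀ (f : τ.Func) (x : τ.arF f → Ω), (∀ i, x i ∈ carrier) → funcMap f x ∈ carrier

namespace ModelOn

variable {τ : Vocab.{u}} {Ω : Type u}

/-- `M` is a substructure of `N`. -/
def Sub (M N : ModelOn τ Ω) : Prop :=
  M.carrier ⊆ N.carrier ∧
    (∀ (f : τ.Func) (x : τ.arF f → Ω), (∀ i, x i ∈ M.carrier) → M.funcMap f x = N.funcMap f x) ∧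
    (∀ (r : τ.Rel) (x : τ.arR r → Ω), (∀ i, x i ∈ M.carrier) → (M.relMap r x ↔ N.relMap r x))

/-- An embedding of `M` into `N` (injective and structure-preserving on the carrier). -/
structure Emb (M N : ModelOn τ Ω) : Type u where
  toFun : Ω → Ω
  maps : ∀ a ∈ M.carrier, toFun a ∈ N.carrier
  injOn : ∀ a ∈ M.carrier, ∀ b ∈ M.carrier, toFun a = toFun b → a = b
  map_func : ∀ (f : τ.Func) (x : τ.arF f → Ω), (∀ i, x i ∈ M.carrier) →
    toFun (M.funcMap f x) = N.funcMap f (toFun ∘ x)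
  map_rel : ∀ (r : τ.Rel) (x : τ.arR r → Ω), (∀ i, x i ∈ M.carrier) →
    (M.relMap r x ↔ N.relMap r (toFun ∘ x))

/-- An embedding is an isomorphism when its image is the full carrier of the target. -/
def Emb.IsIso {M N : ModelOn τ Ω} (g : Emb M N) : Prop :=
  g.toFun '' M.carrier = N.carrier

def Isomorphic (M N : ModelOn τ Ω) : Prop := ∃ g : Emb M N, g.IsIso

end ModelOn

/-! ### Directedness for order relations, unions of chains and systems -/

/-- A relation is `κ`-directed: every subset of size `< κ` has an upper bound. -/
def KappaDirectedRel (κ : Cardinal.{u}) {I : Type u} (r : I → I → Prop) : Prop :=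
  ∀ s : Set I, #s < κ → ∃ t : I, ∀ x ∈ s, r x t

/-- A (nonempty) directed relation. -/
def DirectedRel {I : Type u} (r : I → I → Prop) : Prop :=
  Nonempty I ∧ ∀ a b : I, ∃ c : I, r a c ∧ r b c

/-- The union of the universes of an ordinal-indexed chain `⟨M i : i < δ⟩`. -/
def chainUnion {τ : Vocab.{u}} {Ω : Type u} (δ : Ordinal.{u})
    (M : Ordinal.{u} → ModelOn τ Ω) : Set Ω :=
  ⋃ i ∈ Set.Iio δ, (M i).carrier

/-- The union of the universes of an indexed system. -/
def sysUnion {τ : Vocab.{u}} {Ω : Type u} {I : Type u} (M : I → ModelOn τ Ω) : Set Ω :=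
  ⋃ s, (M s).carrier

/-- Clubs in an ordinal `ρ`. -/
def IsClubIn (Cs : Set Ordinal.{u}) (ρ : Ordinal.{u}) : Prop :=
  Cs ⊆ Set.Iio ρ ∧ (∀ α, α < ρ → ∃ β ∈ Cs, α ≤ β) ∧
  ∀ δ, δ < ρ → Order.IsSuccLimit δ → (∀ α, α < δ → ∃ β ∈ Cs, α ≤ β ∧ β < δ) → δ ∈ Cs

/-- Stationary subsets of an ordinal `ρ`. -/
def IsStationaryIn (S : Set Ordinal.{u}) (ρ : Ordinal.{u}) : Prop :=
  S ⊆ Set.Iio ρ ∧ ∀ Cs : Set Ordinal.{u}, IsClubIn Cs ρ → (S ∩ Cs).Nonempty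

/-- Cofinality on `WithTop Cardinal` (with `cf ∞ = ∞`). -/
noncomputable def wcof (μ : WithTop Cardinal.{u}) : WithTop Cardinal.{u} :=
  μ.map fun c => c.ord.cof

/-- Regularity on `WithTop Cardinal` (`∞` counts as regular). -/
def WRegular (μ : WithTop Cardinal.{u}) : Prop := wcof μ = μ

/-! ### Basic `(μ,λ,κ)`-classes -/

/-- A basic `(μ,λ,κ)`-class: a class `K` of `τ`-structures (with universes of
cardinality in `[λ,μ)`) closed under isomorphism, together with a partial order `≤`
refining substructure, preserved by isomorphisms of pairs, satisfying
Ax I(a), Ax V and Ax VI (LST down to `λ`); here `κ` is regular, `λ = λ^{<κ} ≥ κ`,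
`λ < μ` and `χ < μ → χ^{<κ} < μ` (`μ = ⊤` is allowed). -/
structure BasicClass (τ : Vocab.{u}) (Ω : Type u) (μ : WithTop Cardinal.{u})
    (lam κ : Cardinal.{u}) where
  K : ModelOn τ Ω → Prop
  le : ModelOn τ Ω → ModelOn τ Ω → Prop
  kappa_isRegular : κ.IsRegular
  lam_powerlt : lam ^< κ = lam
  kappa_le_lam : κ ≤ lam
  lam_lt_mu : (lam : WithTop Cardinal.{u}) < μ
  mu_powerlt_closed : ∀ χ : Cardinal.{u}, (χ : WithTop Cardinal.{u}) < μ →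
    ((χ ^< κ : Cardinal.{u}) : WithTop Cardinal.{u}) < μ
  arity_func_le : ∀ f : τ.Func, #(τ.arF f) ≤ lam
  arity_rel_le : ∀ r : τ.Rel, #(τ.arR r) ≤ lam
  K_isoClosed : ∀ {M N : ModelOn τ Ω}, M.Isomorphic N → K M → K N
  le_isoClosed : ∀ {M₁ N₁ M₂ N₂ : ModelOn τ Ω} (g : ModelOn.Emb N₁ N₂), g.IsIso →
    M₁.Sub N₁ → M₂.Sub N₂ → g.toFun '' M₁.carrier = M₂.carrier → le M₁ N₁ → le M₂ N₂
  size_ge : ∀ M : ModelOn τ Ω, K M → lam ≤ #M.carrier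
  size_lt : ∀ M : ModelOn τ Ω, K M →
    ((#M.carrier : Cardinal.{u}) : WithTop Cardinal.{u}) < μ
  le_K_left : ∀ {M N : ModelOn τ Ω}, le M N → K M
  le_K_right : ∀ {M N : ModelOn τ Ω}, le M N → K N
  le_refl : ∀ M : ModelOn τ Ω, K M → le M M
  le_trans : ∀ {M N P : ModelOn τ Ω}, le M N → le N P → le M P
  le_antisymm : ∀ {M N : ModelOn τ Ω}, le M N → le N M → M = N
  axI : ∀ {M N : ModelOn τ Ω}, le M N → M.Sub N
  axV : ∀ {N₁ N₂ M : ModelOn τ Ω}, le N₁ M → le N₂ M → N₁.carrier ⊆ N₂.carrier → le N₁ N₂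
  axVI : ∀ M : ModelOn τ Ω, K M → ∀ A : Set Ω, A ⊆ M.carrier → #A ≤ lam →
    ∃ N : ModelOn τ Ω, le N M ∧ #N.carrier = lam ∧ A ⊆ N.carrier

namespace BasicClass

variable {τ : Vocab.{u}} {Ω : Type u} {μ : WithTop Cardinal.{u}} {lam κ : Cardinal.{u}}

/-- `f` is a `≤_𝔨`-embedding of `M` into `N`: an isomorphism onto some `M' ≤_𝔨 N`. -/
def IsKEmb (C : BasicClass τ Ω μ lam κ) (M N : ModelOn τ Ω) (g : ModelOn.Emb M N) : Prop :=
  ∃ M' : ModelOn τ Ω, C.le M' N ∧ g.toFun '' M.carrier = M'.carrier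

/-- `⟨M i : i < δ⟩` is a `≤`-increasing chain in `K`. -/
def IsChain (C : BasicClass τ Ω μ lam κ) (δ : Ordinal.{u})
    (M : Ordinal.{u} → ModelOn τ Ω) : Prop :=
  (∀ i, i < δ → C.K (M i)) ∧ ∀ i j, i ≤ j → j < δ → C.le (M i) (M j)

/-- A `≤`-increasing system indexed by an order relation. -/
def IsSystem (C : BasicClass τ Ω μ lam κ) {I : Type u} (r : I → I → Prop)
    (M : I → ModelOn τ Ω) : Prop :=
  (∀ s, C.K (M s)) ∧ ∀ s t : I, r s t → C.le (M s) (M t)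

/-- Ax III(a): increasing chains of cofinality `≥ κ` have upper bounds whose
universe is the union. -/
def AxIIIa (C : BasicClass τ Ω μ lam κ) : Prop :=
  ∀ (δ : Ordinal.{u}) (M : Ordinal.{u} → ModelOn τ Ω), 0 < δ → C.IsChain δ M →
    κ ≤ δ.cof → ((#(chainUnion δ M) : Cardinal.{u}) : WithTop Cardinal.{u}) < μ →
    ∃ N : ModelOn τ Ω, C.K N ∧ (∀ i, i < δ → C.le (M i) N) ∧ N.carrier = chainUnion δ M

/-- Ax III(b): increasing chains have upper bounds. -/
def AxIIIb (C : BasicClass τ Ω μ lam κ) : Prop :=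
  ∀ (δ : Ordinal.{u}) (M : Ordinal.{u} → ModelOn τ Ω), 0 < δ → C.IsChain δ M →
    ((#(chainUnion δ M) : Cardinal.{u}) : WithTop Cardinal.{u}) < μ →
    ∃ N : ModelOn τ Ω, C.K N ∧ ∀ i, i < δ → C.le (M i) N

/-- Ax III(c): `κ`-directed increasing systems have upper bounds. -/
def AxIIIc (C : BasicClass τ Ω μ lam κ) : Prop :=
  ∀ (I : Type u) (r : I → I → Prop), IsPartialOrder I r → KappaDirectedRel κ r →
    ∀ M : I → ModelOn τ Ω, C.IsSystem r M →
    (((Cardinal.sum fun s => #(M s).carrier) : Cardinal.{u}) : WithTop Cardinal.{u}) < μ →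
    ∃ N : ModelOn τ Ω, C.K N ∧ ∀ s, C.le (M s) N

/-- Ax III(d): `κ`-directed increasing systems with `|I| < μ` have a unique
upper bound whose universe is the union (the `≤`-union). -/
def AxIIId (C : BasicClass τ Ω μ lam κ) : Prop :=
  ∀ (I : Type u) (r : I → I → Prop), IsPartialOrder I r → KappaDirectedRel κ r →
    ∀ M : I → ModelOn τ Ω, C.IsSystem r M →
    ((#I : Cardinal.{u}) : WithTop Cardinal.{u}) < μ →
    ((#(sysUnion M) : Cardinal.{u}) : WithTop Cardinal.{u}) < μ →
    ∃! N : ModelOn τ Ω, C.K N ∧ N.carrier = sysUnion M ∧ ∀ s, C.le (M s) N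

/-- Ax III(e): like Ax III(c) for arbitrary directed index orders. -/
def AxIIIe (C : BasicClass τ Ω μ lam κ) : Prop :=
  ∀ (I : Type u) (r : I → I → Prop), IsPartialOrder I r → DirectedRel r →
    ∀ M : I → ModelOn τ Ω, C.IsSystem r M →
    (((Cardinal.sum fun s => #(M s).carrier) : Cardinal.{u}) : WithTop Cardinal.{u}) < μ →
    ∃ N : ModelOn τ Ω, C.K N ∧ ∀ s, C.le (M s) N

/-- Ax IV(a): weak smoothness for chains of cofinality `≥ κ`. -/
def AxIVa (C : BasicClass τ Ω μ lam κ) : Prop :=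
  ∀ (δ : Ordinal.{u}) (M : Ordinal.{u} → ModelOn τ Ω), 0 < δ → C.IsChain δ M →
    κ ≤ δ.cof →
    ∀ Mtop : ModelOn τ Ω, C.K Mtop → (∀ i, i < δ → C.le (M i) Mtop) →
      Mtop.carrier = chainUnion δ M →
    ∀ N : ModelOn τ Ω, C.K N → (∀ i, i < δ → C.le (M i) N) → C.le Mtop N

/-- Ax IV(b): any two upper bounds of a chain can be amalgamated over the chain. -/
def AxIVb (C : BasicClass τ Ω μ lam κ) : Prop :=
  ∀ (δ : Ordinal.{u}) (M : Ordinal.{u} → ModelOn τ Ω), 0 < δ → C.IsChain δ M →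
    ∀ N₁ N₂ : ModelOn τ Ω, (∀ i, i < δ → C.le (M i) N₁) → (∀ i, i < δ → C.le (M i) N₂) →
    ∃ (N : ModelOn τ Ω) (f₁ : ModelOn.Emb N₁ N) (f₂ : ModelOn.Emb N₂ N),
      C.K N ∧ C.IsKEmb N₁ N f₁ ∧ C.IsKEmb N₂ N f₂ ∧
      ∀ i, i < δ → ∀ a ∈ (M i).carrier, f₁.toFun a = f₂.toFun a

/-- Ax IV(c): weak uniqueness of bounds of `κ`-directed systems. -/
def AxIVc (C : BasicClass τ Ω μ lam κ) : Prop :=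
  ∀ (I : Type u) (r : I → I → Prop), IsPartialOrder I r → KappaDirectedRel κ r →
    ∀ M : I → ModelOn τ Ω, C.IsSystem r M →
    ∀ N₁ N₂ : ModelOn τ Ω, (∀ s, C.le (M s) N₁) → (∀ s, C.le (M s) N₂) →
    ∃ (N₂' : ModelOn τ Ω) (f : ModelOn.Emb N₁ N₂'),
      C.le N₂ N₂' ∧ C.IsKEmb N₁ N₂' f ∧ ∀ s, ∀ a ∈ (M s).carrier, f.toFun a = a

/-- Ax IV(d) (smoothness): a bound of a `κ`-directed system whose universe is the
union lies below every bound. -/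
def AxIVd (C : BasicClass τ Ω μ lam κ) : Prop :=
  ∀ (I : Type u) (r : I → I → Prop), IsPartialOrder I r → KappaDirectedRel κ r →
    ∀ M : I → ModelOn τ Ω, C.IsSystem r M →
    ∀ Mtop : ModelOn τ Ω, C.K Mtop → (∀ s, C.le (M s) Mtop) → Mtop.carrier = sysUnion M →
    ∀ N : ModelOn τ Ω, C.K N → (∀ s, C.le (M s) N) → C.le Mtop N

/-- Ax IV(e): like Ax IV(c) for arbitrary directed index orders. -/
def AxIVe (C : BasicClass τ Ω μ lam κ) : Prop :=
  ∀ (I : Type u) (r : I → I → Prop), IsPartialOrder I r → DirectedRel r →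
    ∀ M : I → ModelOn τ Ω, C.IsSystem r M →
    ∀ N₁ N₂ : ModelOn τ Ω, (∀ s, C.le (M s) N₁) → (∀ s, C.le (M s) N₂) →
    ∃ (N₂' : ModelOn τ Ω) (f : ModelOn.Emb N₁ N₂'),
      C.le N₂ N₂' ∧ C.IsKEmb N₁ N₂' f ∧ ∀ s, ∀ a ∈ (M s).carrier, f.toFun a = a

/-- `P` is `≤`-prime over the chain `⟨M i : i < δ⟩`. -/
def IsPrimeOverChain (C : BasicClass τ Ω μ lam κ) (δ : Ordinal.{u})
    (M : Ordinal.{u} → ModelOn τ Ω) (P : ModelOn τ Ω) : Prop :=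
  C.K P ∧ (∀ i, i < δ → C.le (M i) P) ∧
    ∀ N : ModelOn τ Ω, C.K N → (∀ i, i < δ → C.le (M i) N) →
      ∃ g : ModelOn.Emb P N, C.IsKEmb P N g ∧ ∀ a ∈ chainUnion δ M, g.toFun a = a

/-- Ax III(f): primes over chains of cofinality `< κ`. -/
def AxIIIf (C : BasicClass τ Ω μ lam κ) : Prop :=
  ∀ (δ : Ordinal.{u}) (M : Ordinal.{u} → ModelOn τ Ω), 0 < δ → C.IsChain δ M →
    δ.cof < κ → ((#(chainUnion δ M) : Cardinal.{u}) : WithTop Cardinal.{u}) < μ →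
    ∃ P : ModelOn τ Ω, C.IsPrimeOverChain δ M P

/-- `P` is `≤`-prime over a directed system. -/
def IsPrimeOverSystem (C : BasicClass τ Ω μ lam κ) {I : Type u} (r : I → I → Prop)
    (M : I → ModelOn τ Ω) (P : ModelOn τ Ω) : Prop :=
  C.K P ∧ (∀ s, C.le (M s) P) ∧
    ∀ N : ModelOn τ Ω, C.K N → (∀ s, C.le (M s) N) →
      ∃ g : ModelOn.Emb P N, C.IsKEmb P N g ∧ ∀ a ∈ sysUnion M, g.toFun a = a

/-- Ax IV(f): primes over directed systems. -/
def AxIVf (C : BasicClass τ Ω μ lam κ) : Prop :=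
  ∀ (I : Type u) (r : I → I → Prop), IsPartialOrder I r → DirectedRel r →
    ∀ M : I → ModelOn τ Ω, C.IsSystem r M →
    ((#(sysUnion M) : Cardinal.{u}) : WithTop Cardinal.{u}) < μ →
    ∃ P : ModelOn τ Ω, C.IsPrimeOverSystem r M P

/-- The amalgamation property. -/
def HasAmalgamation (C : BasicClass τ Ω μ lam κ) : Prop :=
  ∀ M₀ M₁ M₂ : ModelOn τ Ω, C.le M₀ M₁ → C.le M₀ M₂ →
    ∃ (N : ModelOn τ Ω) (f₁ : ModelOn.Emb M₁ N) (f₂ : ModelOn.Emb M₂ N),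
      C.K N ∧ C.IsKEmb M₁ N f₁ ∧ C.IsKEmb M₂ N f₂ ∧
      ∀ a ∈ M₀.carrier, f₁.toFun a = f₂.toFun a

/-- The several kinds of DAEC. -/
def IsDAEC (C : BasicClass τ Ω μ lam κ) : ℕ → Prop
  | 0 => C.AxIIIa ∧ C.AxIVa
  | 1 => C.AxIIIa ∧ C.AxIVa ∧ C.AxIIIb ∧ C.AxIVb
  | 2 => C.AxIIIa ∧ C.AxIVa ∧ C.AxIIId ∧ C.AxIVd
  | 4 => C.AxIIIa ∧ C.AxIVa ∧ C.AxIIIb ∧ C.AxIVb ∧ C.AxIIId ∧ C.AxIVe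
  | _ => False

end BasicClass

/-! ### Orbital types -/

/-- A pointed pair `(M,N,a)` with `M ≤_𝔨 N` and `a ∈ N`. -/
structure BasicClass.PtType {τ : Vocab.{u}} {Ω : Type u} {μ : WithTop Cardinal.{u}}
    {lam κ : Cardinal.{u}} (C : BasicClass τ Ω μ lam κ) : Type u where
  M : ModelOn τ Ω
  N : ModelOn τ Ω
  a : Ω
  le_MN : C.le M N
  mem : a ∈ N.carrier

namespace BasicClass

variable {τ : Vocab.{u}} {Ω : Type u} {μ : WithTop Cardinal.{u}} {lam κ : Cardinal.{u}}

/-- The atomic relation `𝓔^at`: two pointed pairs over the same `M` are identified by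
a pair of `≤`-embeddings into a common model, fixing `M` pointwise and matching the points. -/
def AtEq (C : BasicClass τ Ω μ lam κ) (t₁ t₂ : C.PtType) : Prop :=
  t₁.M = t₂.M ∧ ∃ (N' : ModelOn τ Ω) (f₁ : ModelOn.Emb t₁.N N') (f₂ : ModelOn.Emb t₂.N N'),
    C.K N' ∧ C.IsKEmb t₁.N N' f₁ ∧ C.IsKEmb t₂.N N' f₂ ∧
    (∀ a ∈ t₁.M.carrier, f₁.toFun a = a) ∧ (∀ a ∈ t₂.M.carrier, f₂.toFun a = a) ∧
    f₁.toFun t₁.a = f₂.toFun t₂.a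

/-- Equality of orbital types: the transitive closure of the atomic relation. -/
def TypeEquiv (C : BasicClass τ Ω μ lam κ) : C.PtType → C.PtType → Prop :=
  Relation.TransGen C.AtEq

/-- Restricting a type to a smaller model. -/
def PtType.restrict {C : BasicClass τ Ω μ lam κ} (t : C.PtType) (M₀ : ModelOn τ Ω)
    (h : C.le M₀ t.M) : C.PtType :=
  ⟨M₀, t.N, t.a, C.le_trans h t.le_MN, t.mem⟩

/-- `𝔨` is stable in `χ`. -/
def StableIn (C : BasicClass τ Ω μ lam κ) (χ : Cardinal.{u}) : Prop :=
  lam ≤ χ ∧ χ ^< κ = χ ∧ ((χ : WithTop Cardinal.{u}) < μ) ∧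
  (∀ M : ModelOn τ Ω, C.K M → #M.carrier = χ →
    ∃ T : Set C.PtType, #T ≤ χ ∧
      ∀ t : C.PtType, t.M = M → ∃ t' ∈ T, C.TypeEquiv t t') ∧
  (∀ M₀ M₁ M₂ : ModelOn τ Ω, #M₀.carrier = χ → #M₁.carrier = χ → #M₂.carrier = χ →
    C.le M₀ M₁ → C.le M₀ M₂ →
    ∃ (N : ModelOn τ Ω) (f₁ : ModelOn.Emb M₁ N) (f₂ : ModelOn.Emb M₂ N),
      C.K N ∧ C.IsKEmb M₁ N f₁ ∧ C.IsKEmb M₂ N f₂ ∧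
      ∀ a ∈ M₀.carrier, f₁.toFun a = f₂.toFun a)

/-- `N` is `≤`-universal over `M` in cardinality `χ`. -/
def UnivOver (C : BasicClass τ Ω μ lam κ) (χ : Cardinal.{u}) (N M : ModelOn τ Ω) : Prop :=
  C.le M N ∧ ∀ M' : ModelOn τ Ω, C.le M M' → #M'.carrier = χ →
    ∃ f : ModelOn.Emb M' N, C.IsKEmb M' N f ∧ ∀ a ∈ M.carrier, f.toFun a = a

/-- A `≤`-increasing `≤`-semi-continuous sequence `⟨M i : i < α⟩`. -/
def SemiCont (C : BasicClass τ Ω μ lam κ) (α : Ordinal.{u})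
    (M : Ordinal.{u} → ModelOn τ Ω) : Prop :=
  (∀ i, i < α → C.K (M i)) ∧
  (∀ i j, i ≤ j → j < α → C.le (M i) (M j)) ∧
  (∀ δ, δ < α → Order.IsSuccLimit δ → κ ≤ δ.cof → (M δ).carrier = chainUnion δ M) ∧
  (∀ δ, δ < α → Order.IsSuccLimit δ → δ.cof < κ → C.IsPrimeOverChain δ M (M δ))

/-- `N` is `(χ,σ)`-brimmed over `M`. -/
def Brimmed (C : BasicClass τ Ω μ lam κ) (χ σ : Cardinal.{u}) (N M : ModelOn τ Ω) : Prop :=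
  ∃ Ms : Ordinal.{u} → ModelOn τ Ω,
    C.SemiCont σ.ord Ms ∧
    (∀ i, i < σ.ord → #(Ms i).carrier = χ) ∧
    Ms 0 = M ∧
    (∀ i, i < σ.ord → C.UnivOver χ (Ms (i + 1)) (Ms i)) ∧
    C.K N ∧ (∀ i, i < σ.ord → C.le (Ms i) N) ∧ N.carrier = chainUnion σ.ord Ms

/-- `Mstar ∈ K_χ` is `(χ, ≥κ)`-superlimit₁. -/
def Superlimit1 (C : BasicClass τ Ω μ lam κ) (χ : Cardinal.{u}) (Mstar : ModelOn τ Ω) : Prop :=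
  C.K Mstar ∧ #Mstar.carrier = χ ∧
  (∀ N : ModelOn τ Ω, C.K N → #N.carrier = χ →
    ∃ (f : ModelOn.Emb N Mstar) (M' : ModelOn τ Ω),
      C.le M' Mstar ∧ M' ≠ Mstar ∧ f.toFun '' N.carrier = M'.carrier) ∧
  (∀ (δ : Ordinal.{u}) (Ms : Ordinal.{u} → ModelOn τ Ω) (Mδ : ModelOn τ Ω),
    0 < δ → δ.card ≤ χ → κ ≤ δ.cof →
    (∀ i j, i ≤ j → j < δ → C.le (Ms i) (Ms j)) →
    (∀ i, i < δ → (Ms i).Isomorphic Mstar) →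
    (∀ i, i < δ → C.le (Ms i) Mδ) → Mδ.carrier = chainUnion δ Ms →
    Mδ.Isomorphic Mstar)

/-- `Mstar ∈ K_χ` is `(χ, ≥κ)`-superlimit₂. -/
def Superlimit2 (C : BasicClass τ Ω μ lam κ) (χ : Cardinal.{u}) (Mstar : ModelOn τ Ω) : Prop :=
  C.K Mstar ∧ #Mstar.carrier = χ ∧
  (∀ N : ModelOn τ Ω, C.K N → #N.carrier = χ →
    ∃ (f : ModelOn.Emb N Mstar) (M' : ModelOn τ Ω),
      C.le M' Mstar ∧ M' ≠ Mstar ∧ f.toFun '' N.carrier = M'.carrier) ∧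
  (∀ (I : Type u) (r : I → I → Prop), IsPartialOrder I r → KappaDirectedRel κ r →
    #I ≤ χ →
    ∀ (Ms : I → ModelOn τ Ω) (Mtop : ModelOn τ Ω),
      C.IsSystem r Ms →
      (∀ s, (Ms s).Isomorphic Mstar) →
      (∀ s, C.le (Ms s) Mtop) → Mtop.carrier = sysUnion Ms →
      Mtop.Isomorphic Mstar)

/-! ### The lifting of a `(λ⁺,λ,κ)`-class -/

/-- `⟨Msys s : s ∈ I⟩` (a `κ`-directed, `≤`-increasing system of models of size `λ`)
is a witness for `M` belonging to the lifted class. -/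
def IsWitness (C : BasicClass τ Ω μ lam κ) {I : Type u} (r : I → I → Prop)
    (Msys : I → ModelOn τ Ω) (M : ModelOn τ Ω) : Prop :=
  IsPartialOrder I r ∧ KappaDirectedRel κ r ∧
  (∀ s, C.K (Msys s) ∧ #(Msys s).carrier = lam) ∧
  (∀ s t, r s t → C.le (Msys s) (Msys t)) ∧
  (∀ J : Set I, #J ≤ lam → KappaDirectedRel κ (fun a b : J => r a.1 b.1) →
    ∀ MJ : ModelOn τ Ω, C.K MJ → MJ.carrier = ⋃ t ∈ J, (Msys t).carrier →
      (∀ t ∈ J, C.le (Msys t) MJ) → MJ.Sub M) ∧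
  M.carrier = ⋃ t, (Msys t).carrier

/-- The class of models of the lifting `𝔨'` of `𝔨_λ`. -/
def LiftK (C : BasicClass τ Ω μ lam κ) (M : ModelOn τ Ω) : Prop :=
  ∃ (I : Type u) (r : I → I → Prop) (Msys : I → ModelOn τ Ω), C.IsWitness r Msys M

/-- The order of the lifting `𝔨'` of `𝔨_λ`. -/
def LiftLE (C : BasicClass τ Ω μ lam κ) (M N : ModelOn τ Ω) : Prop :=
  ∃ (J : Type u) (r : J → J → Prop) (I : Set J) (Msys : J → ModelOn τ Ω),
    C.IsWitness r Msys N ∧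
    C.IsWitness (fun a b : I => r a.1 b.1) (fun s : I => Msys s.1) M

end BasicClass

/-! ### Good `(μ,λ,κ)`-ι-frames -/

/-- `(M,N,a)` is a prime triple for the class of basic types `bs`. -/
def IsK3pr {τ : Vocab.{u}} {Ω : Type u} {μ : WithTop Cardinal.{u}} {lam κ : Cardinal.{u}}
    (C : BasicClass τ Ω μ lam κ) (bs : C.PtType → Prop)
    (M N : ModelOn τ Ω) (a : Ω) : Prop :=
  ∃ (h : C.le M N) (ha : a ∈ N.carrier),
    bs ⟨M, N, a, h, ha⟩ ∧
    ∀ (N' : ModelOn τ Ω) (a' : Ω) (h' : C.le M N') (ha' : a' ∈ N'.carrier),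
      C.TypeEquiv ⟨M, N, a, h, ha⟩ ⟨M, N', a', h', ha'⟩ →
      ∃ g : ModelOn.Emb N N', C.IsKEmb N N' g ∧
        (∀ x ∈ M.carrier, g.toFun x = x) ∧ g.toFun a = a'

/-- A good `(μ,λ,κ)`-`ι`-frame: a `(μ,λ,κ)`-4-DAEC with a superlimit in `λ`,
amalgamation, JEP, no maximal model, primes (over chains for `ι ≥ 1`, over directed
systems for `ι = 4`), a class of basic types with density and bs-stability, and a
non-forking relation with the usual axioms. -/
structure GoodFrame (τ : Vocab.{u}) (Ω : Type u) (μ : WithTop Cardinal.{u})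
    (lam κ : Cardinal.{u}) (ι : ℕ) where
  C : BasicClass τ Ω μ lam κ
  axIIIa : C.AxIIIa
  axIVa : C.AxIVa
  axIIIb : C.AxIIIb
  axIVb : C.AxIVb
  axIIId : C.AxIIId
  axIVe : C.AxIVe
  primes_chain : 1 ≤ ι → C.AxIIIf
  primes_directed : 4 ≤ ι → C.AxIVf
  superlimit : ∃ Mstar : ModelOn τ Ω, C.Superlimit1 lam Mstar
  amalg : C.HasAmalgamation
  jep : ∀ M N : ModelOn τ Ω, C.K M → C.K N →
    ∃ (P : ModelOn τ Ω) (f : ModelOn.Emb M P) (g : ModelOn.Emb N P),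
      C.K P ∧ C.IsKEmb M P f ∧ C.IsKEmb N P g
  noMaximal : ∀ M : ModelOn τ Ω, C.K M → ∃ N : ModelOn τ Ω, C.le M N ∧ N ≠ M
  bs : C.PtType → Prop
  bs_equivClosed : ∀ t₁ t₂ : C.PtType, C.TypeEquiv t₁ t₂ → bs t₁ → bs t₂
  bs_nonalg : ∀ t : C.PtType, bs t → t.a ∉ t.M.carrier
  density : ∀ (M N : ModelOn τ Ω) (h : C.le M N), M ≠ N →
    ∃ (a : Ω) (ha : a ∈ N.carrier), a ∉ M.carrier ∧ bs ⟨M, N, a, h, ha⟩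
  bs_stability : ∀ M : ModelOn τ Ω, C.K M →
    ∃ T : Set C.PtType, #T ≤ (#M.carrier) ^< κ ∧
      ∀ t : C.PtType, t.M = M → bs t → ∃ t' ∈ T, C.TypeEquiv t t'
  nf : ModelOn τ Ω → ModelOn τ Ω → Ω → ModelOn τ Ω → Prop
  nf_spec : ∀ M₀ M₁ a M₃, nf M₀ M₁ a M₃ →
    C.le M₀ M₁ ∧ ∃ (h₁ : C.le M₁ M₃) (ha : a ∈ M₃.carrier),
      a ∉ M₁.carrier ∧ bs ⟨M₁, M₃, a, h₁, ha⟩ ∧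
      ∃ h₀ : C.le M₀ M₃, bs ⟨M₀, M₃, a, h₀, ha⟩
  nf_base : ∀ (M₀ M₃ : ModelOn τ Ω) (a : Ω) (h : C.le M₀ M₃) (ha : a ∈ M₃.carrier),
    a ∉ M₀.carrier → (nf M₀ M₀ a M₃ ↔ bs ⟨M₀, M₃, a, h, ha⟩)
  nf_typeInv : ∀ (M₀ M₁ M₃ M₃' : ModelOn τ Ω) (a a' : Ω)
    (h : C.le M₁ M₃) (ha : a ∈ M₃.carrier) (h' : C.le M₁ M₃') (ha' : a' ∈ M₃'.carrier),
    C.TypeEquiv ⟨M₁, M₃, a, h, ha⟩ ⟨M₁, M₃', a', h', ha'⟩ →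
    nf M₀ M₁ a M₃ → nf M₀ M₁ a' M₃'
  nf_mono : ∀ {M₀ M₀' M₁' M₁ M₃ M₃' : ModelOn τ Ω} (a : Ω),
    C.le M₀ M₀' → C.le M₀' M₁' → C.le M₁' M₁ → C.le M₁ M₃ → C.le M₃ M₃' →
    a ∉ M₁'.carrier → nf M₀ M₁ a M₃ → nf M₀' M₁' a M₃'
  nf_restr : ∀ {M₀ M₁ M₃ M₃'' : ModelOn τ Ω} (a : Ω),
    C.le M₁ M₃'' → C.le M₃'' M₃ → a ∈ M₃''.carrier →
    (nf M₀ M₁ a M₃ ↔ nf M₀ M₁ a M₃'')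
  nf_trans : ∀ {M₀ M₀' M₀'' M₃ : ModelOn τ Ω} (a : Ω),
    C.le M₀ M₀' → C.le M₀' M₀'' → C.le M₀'' M₃ →
    nf M₀' M₀'' a M₃ → nf M₀ M₀' a M₃ → nf M₀ M₀'' a M₃
  nf_localChar : ∀ (I : Type u) (r : I → I → Prop), IsPartialOrder I r →
    KappaDirectedRel κ r → ∀ Msys : I → ModelOn τ Ω, C.IsSystem r Msys →
    ∀ Mu : ModelOn τ Ω, C.K Mu → (∀ s, C.le (Msys s) Mu) → Mu.carrier = sysUnion Msys →
    ∀ (N : ModelOn τ Ω) (a : Ω) (h : C.le Mu N) (ha : a ∈ N.carrier),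
      a ∉ Mu.carrier → bs ⟨Mu, N, a, h, ha⟩ →
      ∃ s : I, ∀ t, r s t → nf (Msys t) Mu a N
  nf_unique : ∀ (M₀ M₁ N N' : ModelOn τ Ω) (a b : Ω)
    (h₀ : C.le M₀ M₁) (hN : C.le M₁ N) (hN' : C.le M₁ N')
    (ha : a ∈ N.carrier) (hb : b ∈ N'.carrier),
    nf M₀ M₁ a N → nf M₀ M₁ b N' →
    C.TypeEquiv ⟨M₀, N, a, C.le_trans h₀ hN, ha⟩ ⟨M₀, N', b, C.le_trans h₀ hN', hb⟩ →
    C.TypeEquiv ⟨M₁, N, a, hN, ha⟩ ⟨M₁, N', b, hN', hb⟩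
  nf_symm : 3 ≤ ι → ∀ (M₀ M₁ M₂ M₃ : ModelOn τ Ω) (a₁ a₂ : Ω),
    C.le M₀ M₁ → C.le M₀ M₂ → C.le M₁ M₃ → C.le M₂ M₃ →
    a₁ ∈ M₁.carrier → a₂ ∈ M₂.carrier →
    IsK3pr C bs M₀ M₁ a₁ → IsK3pr C bs M₀ M₂ a₂ →
    (nf M₀ M₁ a₂ M₃ ↔ nf M₀ M₂ a₁ M₃)
  nf_exists : ∀ (M N : ModelOn τ Ω), C.le M N →
    ∀ (P : ModelOn τ Ω) (a : Ω) (h₁ : C.le M P) (h₂ : a ∈ P.carrier),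
    bs ⟨M, P, a, h₁, h₂⟩ →
    ∃ (Q : ModelOn τ Ω) (b : Ω) (hNQ : C.le N Q) (hb : b ∈ Q.carrier) (hMQ : C.le M Q),
      nf M N b Q ∧ C.TypeEquiv ⟨M, Q, b, hMQ, hb⟩ ⟨M, P, a, h₁, h₂⟩
  nf_continuity : ∀ (δ : Ordinal.{u}) (Ms : Ordinal.{u} → ModelOn τ Ω), 0 < δ →
    C.IsChain δ Ms → ∀ Mδ : ModelOn τ Ω, C.K Mδ → (∀ i, i < δ → C.le (Ms i) Mδ) →
    Mδ.carrier = chainUnion δ Ms →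
    ∀ (N : ModelOn τ Ω) (a : Ω), C.le Mδ N → a ∈ N.carrier →
    (∀ i, i < δ → nf (Ms 0) (Ms i) a N) → nf (Ms 0) Mδ a N
  nf_strong_continuity : ∀ (δ : Ordinal.{u}) (Ms : Ordinal.{u} → ModelOn τ Ω), 0 < δ →
    C.IsChain δ Ms → ∀ Mδ : ModelOn τ Ω, C.IsPrimeOverChain δ Ms Mδ →
    ∀ (N : ModelOn τ Ω) (b : Ω), C.le Mδ N → b ∈ N.carrier → b ∉ Mδ.carrier →
    (∀ i, i < δ → nf (Ms 0) (Ms i) b N) → nf (Ms 0) Mδ b N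
  primes_pr : 1 ≤ ι →
    ∀ (M P : ModelOn τ Ω) (a : Ω) (h₁ : C.le M P) (h₂ : a ∈ P.carrier),
    bs ⟨M, P, a, h₁, h₂⟩ →
    ∃ (N : ModelOn τ Ω) (b : Ω) (hMN : C.le M N) (hb : b ∈ N.carrier),
      IsK3pr C bs M N b ∧ C.TypeEquiv ⟨M, N, b, hMN, hb⟩ ⟨M, P, a, h₁, h₂⟩
  based_small : ∀ (N P : ModelOn τ Ω) (a : Ω) (h₁ : C.le N P) (h₂ : a ∈ P.carrier),
    bs ⟨N, P, a, h₁, h₂⟩ → ∃ M : ModelOn τ Ω, C.le M N ∧ #M.carrier = lam ∧ nf M N a P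

namespace GoodFrame

variable {τ : Vocab.{u}} {Ω : Type u} {μ : WithTop Cardinal.{u}} {lam κ : Cardinal.{u}} {ι : ℕ}

/-- Prime triples of the frame. -/
def K3prT (F : GoodFrame τ Ω μ lam κ ι) (M N : ModelOn τ Ω) (a : Ω) : Prop :=
  IsK3pr F.C F.bs M N a

/-- The set `J` is independent in `(M₀, M₁, M₂)`. -/
def Independent (F : GoodFrame τ Ω μ lam κ ι) (M₀ M₁ M₂ : ModelOn τ Ω) (J : Set Ω) : Prop :=
  F.C.le M₀ M₁ ∧ F.C.le M₁ M₂ ∧ J ⊆ M₂.carrier ∧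
  (∀ a ∈ J, F.nf M₀ M₁ a M₂) ∧
  ∃ (αs : Ordinal.{u}) (t : Ordinal.{u} → Ω) (Ms : Ordinal.{u} → ModelOn τ Ω),
    (∀ α, α < αs → t α ∈ J) ∧
    (∀ a ∈ J, ∃ α, α < αs ∧ t α = a) ∧
    (∀ α β, α < β → β < αs → t α ≠ t β) ∧
    (∀ α β, α ≤ β → β ≤ αs + 1 → F.C.le (Ms α) (Ms β)) ∧
    F.C.le M₁ (Ms 0) ∧ F.C.le M₂ (Ms (αs + 1)) ∧
    (∀ α, α < αs → t α ∈ (Ms (α + 1)).carrier ∧ F.nf M₀ (Ms α) (t α) (Ms (α + 1)))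

/-- `J` is independent in `(M, N)`. -/
def IndependentIn (F : GoodFrame τ Ω μ lam κ ι) (M N : ModelOn τ Ω) (J : Set Ω) : Prop :=
  F.Independent M M N J

/-- `(M,N,J) ∈ K^{3,bs}`. -/
def K3bs (F : GoodFrame τ Ω μ lam κ ι) (M N : ModelOn τ Ω) (J : Set Ω) : Prop :=
  F.C.le M N ∧ F.IndependentIn M N J

/-- `(M,N,J) ∈ K^{3,qr}`. -/
def K3qr (F : GoodFrame τ Ω μ lam κ ι) (M N : ModelOn τ Ω) (J : Set Ω) : Prop :=
  F.K3bs M N J ∧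
  ∀ (N' : ModelOn τ Ω) (h : Ω → Ω), F.C.le M N' →
    Set.InjOn h J → (∀ a ∈ J, h a ∈ N'.carrier) →
    F.K3bs M N' (h '' J) →
    ∃ g : ModelOn.Emb N N', F.C.IsKEmb N N' g ∧
      (∀ x ∈ M.carrier, g.toFun x = x) ∧ ∀ a ∈ J, g.toFun a = h a

/-- `𝔰` is a strongly good frame. -/
def StronglyGood (F : GoodFrame τ Ω μ lam κ ι) : Prop :=
  ∀ (M M₁ N : ModelOn τ Ω) (J₁ J₂ : Set Ω), Disjoint J₁ J₂ →
    F.K3bs M N (J₁ ∪ J₂) → F.C.le M M₁ → F.C.le M₁ N → F.K3qr M M₁ J₁ →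
    F.K3bs M₁ N J₂ ∧ ∀ a ∈ J₂, F.nf M M₁ a N

/-- `q` is a non-forking extension of the type `p`. -/
def NFExt (F : GoodFrame τ Ω μ lam κ ι) (p q : F.C.PtType) : Prop :=
  ∃ h : F.C.le p.M q.M, F.nf p.M q.M q.a q.N ∧
    F.C.TypeEquiv (q.restrict p.M h) p

/-- Two types are parallel when they have a common non-forking extension. -/
def Parallel (F : GoodFrame τ Ω μ lam κ ι) (p₁ p₂ : F.C.PtType) : Prop :=
  ∃ q : F.C.PtType, F.NFExt p₁ q ∧ F.NFExt p₂ q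

/-- Weak orthogonality of two basic types over the same model. -/
def WkOrth (F : GoodFrame τ Ω μ lam κ ι) (p₁ p₂ : F.C.PtType) : Prop :=
  p₁.M = p₂.M ∧
  ∀ (M₁ M₂ M₃ : ModelOn τ Ω) (a₁ a₂ : Ω)
    (h₁ : F.C.le p₁.M M₁) (h₂ : F.C.le p₁.M M₂),
    F.C.le M₁ M₃ → F.C.le M₂ M₃ →
    ∀ (ha₁ : a₁ ∈ M₁.carrier) (ha₂ : a₂ ∈ M₂.carrier),
    F.K3prT p₁.M M₁ a₁ → F.K3prT p₁.M M₂ a₂ →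
    F.C.TypeEquiv ⟨p₁.M, M₁, a₁, h₁, ha₁⟩ p₁ →
    F.C.TypeEquiv ⟨p₁.M, M₂, a₂, h₂, ha₂⟩ p₂ →
    F.nf p₁.M M₁ a₂ M₃

/-- Orthogonality: all pairs of non-forking extensions to a common model are
weakly orthogonal. -/
def Orth (F : GoodFrame τ Ω μ lam κ ι) (p₁ p₂ : F.C.PtType) : Prop :=
  ∀ q₁ q₂ : F.C.PtType, q₁.M = q₂.M → F.NFExt p₁ q₁ → F.NFExt p₂ q₂ → F.WkOrth q₁ q₂

/-- `p` is strongly dominated by `{p_t : t ∈ I}` (with common extension model `N⁺`). -/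
def StDom (F : GoodFrame τ Ω μ lam κ ι) {I : Type u} (p : F.C.PtType)
    (Nplus : ModelOn τ Ω) (pt : I → F.C.PtType) : Prop :=
  F.C.K Nplus ∧ F.C.le p.M Nplus ∧ (∀ t, F.C.le (pt t).M Nplus) ∧
  ∀ (Nstar : ModelOn τ Ω) (hst : F.C.le Nplus Nstar) (a : I → Ω),
    Function.Injective a →
    F.IndependentIn Nplus Nstar (Set.range a) →
    (∀ t, ∃ ha : a t ∈ Nstar.carrier,
      F.Parallel ⟨Nplus, Nstar, a t, hst, ha⟩ (pt t)) →
    ∀ p' : F.C.PtType, p'.M = Nplus → F.Parallel p' p →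
      ∃ (c : Ω) (hc : c ∈ Nstar.carrier),
        F.C.TypeEquiv ⟨Nplus, Nstar, c, hst, hc⟩ p'

/-- `p` is weakly dominated by `{p_t : t ∈ I}`. -/
def WkDom (F : GoodFrame τ Ω μ lam κ ι) {I : Type u} (p : F.C.PtType)
    (Nplus : ModelOn τ Ω) (pt : I → F.C.PtType) : Prop :=
  ∃ (J : Type u) (h : J → I), Function.Surjective h ∧ F.StDom p Nplus (pt ∘ h)

/-- `𝔰` is type-full: the basic types are exactly the non-algebraic ones. -/
def TypeFull (F : GoodFrame τ Ω μ lam κ ι) : Prop :=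
  ∀ t : F.C.PtType, t.a ∉ t.M.carrier → F.bs t

end GoodFrame

namespace Cardinal

variable {κ : Cardinal.{u}}

theorem exists_forall_lt_of_isRegular (hκ : κ.IsRegular) {ι : Type u} (hι : #ι < κ)
    (f : ι → κ.ord.ToType) : ∃ j, ∀ i, f i < j := by
  by_contra! h
  have hf : IsCofinal (Set.range f) := fun j => by
    obtain ⟨i, hi⟩ := h j
    exact ⟨f i, ⟨i, rfl⟩, hi⟩
  have hκf := (Order.cof_le hf).trans mk_range_le
  rw [Ordinal.cof_toType, hκ.cof_ord] at hκf
  exact hκf.not_gt hι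

theorem IsRegular.one_lt (hκ : κ.IsRegular) : 1 < κ :=
  one_lt_aleph0.trans_le hκ.aleph0_le

theorem self_le_powerlt (χ : Cardinal.{u}) (hκ : 1 < κ) : χ ≤ χ ^< κ := by
  simpa using le_powerlt χ hκ

theorem mk_smallSets_le (hκ : κ.IsRegular) {X : Type u} {θ : Cardinal.{u}} (hκθ : κ ≤ θ)
    (hθ : ∀ c < κ, max #X ℵ₀ ^ c ≤ θ) : #{T : Set X // #T < κ} ≤ θ := by
  let f : (Σ i : κ.ord.ToType, {T : Set X // #T ≤ #(Set.Iio i)}) → {T : Set X // #T < κ} :=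
    fun p => ⟨p.2, p.2.2.trans_lt (by simpa using mk_Iio_lt p.1)⟩
  have hf : f.Surjective := by
    rintro ⟨T, hT⟩
    have hTκ : (#T).ord < Ordinal.type (α := κ.ord.ToType) (· < ·) := by
      rwa [Ordinal.type_toType, ord_lt_ord]
    let i := Ordinal.enum (α := κ.ord.ToType) (· < ·) ⟨_, Set.mem_Iio.2 hTκ⟩
    have hi : #(Set.Iio i) = #T := by
      rw [← card_ord #T, ← Ordinal.typein_enum (α := κ.ord.ToType) (· < ·) hTκ]
      rfl
    exact ⟨⟨i, T, hi.ge⟩, rfl⟩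
  calc #{T : Set X // #T < κ}
      ≤ sum fun i : κ.ord.ToType => #{T : Set X // #T ≤ #(Set.Iio i)} :=
        (mk_le_of_surjective hf).trans (mk_sigma _).le
    _ ≤ sum fun _ : κ.ord.ToType => θ :=
        sum_le_sum _ _ fun i => (mk_bounded_set_le X _).trans
          (hθ _ (by simpa using mk_Iio_lt i))
    _ = θ := by
        rw [sum_const', mk_ord_toType, mul_eq_right (hκ.aleph0_le.trans hκθ) hκθ hκ.pos.ne']

theorem powerlt_le_mk_smallSets {X : Type u} (hκX : κ ≤ #X) :
    #X ^< κ ≤ #{T : Set (X × X) // #T < κ} := by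
  refine powerlt_le.2 fun d hd => ?_
  obtain ⟨e⟩ : Nonempty (d.out ↪ X) := by rw [← le_def, mk_out]; exact hd.le.trans hκX
  rw [← mk_out d, power_def]
  refine mk_le_of_injective (f := fun g : d.out → X =>
    ⟨Set.range fun y => (e y, g y), mk_range_le.trans_lt (by rwa [mk_out])⟩)
    fun g₁ g₂ h => funext fun y => ?_
  have hrange : (Set.range fun y => (e y, g₁ y)) = Set.range fun y => (e y, g₂ y) :=
    congrArg Subtype.val h
  obtain ⟨y', hy'⟩ : (e y, g₁ y) ∈ Set.range fun y => (e y, g₂ y) :=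
    hrange ▸ ⟨y, rfl⟩
  obtain rfl := e.injective (congrArg Prod.fst hy')
  exact (congrArg Prod.snd hy').symm

theorem mk_smallSets_power_le (hκ : κ.IsRegular) {X Y : Type u} (hY : #Y < κ) :
    #{T : Set X // #T < κ} ^ #Y ≤ #{T : Set (Y × X) // #T < κ} := by
  rw [power_def]
  refine mk_le_of_injective (f := fun g : Y → {T : Set X // #T < κ} =>
    ⟨⋃ y, Prod.mk y '' (g y).1, (card_iUnion_lt_iff_forall_of_isRegular hκ hY).2
      fun y => mk_image_le.trans_lt (g y).2⟩) fun g₁ g₂ h => ?_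
  funext y
  ext x
  simpa using congrArg (fun T => (y, x) ∈ T.1) h

theorem powerlt_power_le (hκ : κ.IsRegular) {χ c : Cardinal.{u}} (hκχ : κ ≤ χ)
    (hc : c < κ) : (χ ^< κ) ^ c ≤ χ ^< κ := by
  have hχ : ℵ₀ ≤ χ := hκ.aleph0_le.trans hκχ
  let X := χ.out
  have hX : #X = χ := mk_out χ
  have hcX : #(c.out × X × X) ≤ χ := by
    simp only [mk_prod, lift_id, mk_out]
    exact mul_le_of_le hχ (hc.le.trans hκχ) (mul_le_of_le hχ hX.le hX.le)
  calc (χ ^< κ) ^ c ≤ #{T : Set (X × X) // #T < κ} ^ #c.out := by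
        rw [mk_out, ← hX]; exact power_le_power_right (powerlt_le_mk_smallSets (hX ▸ hκχ))
    _ ≤ #{T : Set (c.out × X × X) // #T < κ} := mk_smallSets_power_le hκ (by rwa [mk_out])
    _ ≤ χ ^< κ := mk_smallSets_le hκ (hκχ.trans (self_le_powerlt χ hκ.one_lt)) fun d hd =>
        (power_le_power_right (max_le hcX hχ)).trans (le_powerlt χ hd)

theorem mk_setOf_subset_lt_le {α : Type u} (P : Set α) (κ : Cardinal.{u}) :
    #{S : Set α | S ⊆ P ∧ #S < κ} ≤ #{T : Set P // #T < κ} := by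
  have hrange : {S : Set α | S ⊆ P ∧ #S < κ} ⊆
      Set.range fun T : {T : Set P // #T < κ} => Subtype.val '' T.1 := by
    rintro S ⟨hSP, hSκ⟩
    refine ⟨⟨Subtype.val ⁻¹' S, ?_⟩, by simpa using hSP⟩
    exact (mk_preimage_of_injective _ _ Subtype.val_injective).trans_lt hSκ
  exact (mk_le_mk_of_subset hrange).trans mk_range_le

end Cardinal

section KappaClosure

variable {α : Type u} {κ : Cardinal.{u}} {q : Set α → α} {G : Set α}

variable (κ q G) in
noncomputable def kappaClosureStage (i : κ.ord.ToType) : Set α :=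
  q '' {S | S ⊆ G ∪ ⋃ j ∈ Set.Iio i, kappaClosureStage j ∧ #S < κ}
termination_by i
decreasing_by assumption

variable (κ q G) in
noncomputable def kappaClosure : Set α :=
  G ∪ ⋃ i, kappaClosureStage κ q G i

theorem subset_kappaClosure : G ⊆ kappaClosure κ q G :=
  Set.subset_union_left

theorem kappaClosure_mono {G' : Set α} (h : G ⊆ G') :
    kappaClosure κ q G ⊆ kappaClosure κ q G' := by
  have hstage : ∀ i, kappaClosureStage κ q G i ⊆ kappaClosureStage κ q G' i := by
    intro i
    induction i using WellFoundedLT.induction with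
    | _ i ih =>
      rw [kappaClosureStage, kappaClosureStage]
      exact Set.image_mono fun S ⟨hS, hSκ⟩ =>
        ⟨hS.trans (Set.union_subset_union h (Set.biUnion_mono subset_rfl ih)), hSκ⟩
  exact Set.union_subset_union h (Set.iUnion_mono hstage)

theorem kappaClosure_subset {Z : Set α} (hG : G ⊆ Z) (hZ : ∀ S ⊆ Z, #S < κ → q S ∈ Z) :
    kappaClosure κ q G ⊆ Z := by
  have hstage : ∀ i, kappaClosureStage κ q G i ⊆ Z := by
    intro i
    induction i using WellFoundedLT.induction with
    | _ i ih =>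
      rw [kappaClosureStage]
      rintro _ ⟨S, ⟨hS, hSκ⟩, rfl⟩
      exact hZ S (hS.trans (Set.union_subset hG (Set.iUnion₂_subset ih))) hSκ
  exact Set.union_subset hG (Set.iUnion_subset hstage)

theorem apply_mem_kappaClosure (hκ : κ.IsRegular) {S : Set α} (hS : S ⊆ kappaClosure κ q G)
    (hSκ : #S < κ) : q S ∈ kappaClosure κ q G := by
  obtain ⟨i₀⟩ : Nonempty κ.ord.ToType := by simpa using hκ.pos.ne'
  have hstage : ∀ x : S, ∃ i, x.1 ∈ G ∨ x.1 ∈ kappaClosureStage κ q G i := fun x =>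
    (hS x.2).elim (fun hx => ⟨i₀, .inl hx⟩) fun hx =>
      (Set.mem_iUnion.1 hx).imp fun _ => .inr
  choose g hg using hstage
  obtain ⟨j, hj⟩ := exists_forall_lt_of_isRegular hκ hSκ g
  refine Or.inr (Set.mem_iUnion.2 ⟨j, ?_⟩)
  rw [kappaClosureStage]
  refine ⟨S, ⟨fun x hx => ?_, hSκ⟩, rfl⟩
  exact (hg ⟨x, hx⟩).imp id fun h => Set.mem_biUnion (hj ⟨x, hx⟩) h

theorem mk_kappaClosure_le (hκ : κ.IsRegular) {θ : Cardinal.{u}} (hκθ : κ ≤ θ)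
    (hθ : ∀ c < κ, θ ^ c ≤ θ) (hG : #G ≤ θ) : #(kappaClosure κ q G) ≤ θ := by
  have hθ₀ : ℵ₀ ≤ θ := hκ.aleph0_le.trans hκθ
  have hιθ : #κ.ord.ToType ≤ θ := by rwa [mk_ord_toType]
  have hstage : ∀ i, #(kappaClosureStage κ q G i) ≤ θ := by
    intro i
    induction i using WellFoundedLT.induction with
    | _ i ih =>
      have hP : #(G ∪ ⋃ j ∈ Set.Iio i, kappaClosureStage κ q G j : Set α) ≤ θ :=
        (mk_union_le _ _).trans <| add_le_of_le hθ₀ hG <| (mk_biUnion_le _ _).trans <|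
          mul_le_of_le hθ₀ ((mk_set_le _).trans hιθ) (ciSup_le' fun j => ih j.1 j.2)
      rw [kappaClosureStage]
      exact mk_image_le.trans <| (mk_setOf_subset_lt_le _ κ).trans <| mk_smallSets_le hκ hκθ
        fun c hc => (power_le_power_right (max_le hP hθ₀)).trans (hθ c hc)
  exact (mk_union_le _ _).trans <| add_le_of_le hθ₀ hG <| (mk_iUnion_le _).trans <|
    mul_le_of_le hθ₀ hιθ (ciSup_le' hstage)

end KappaClosure

namespace ModelOn

variable {τ : Vocab.{u}} {Ω : Type u} {M N : ModelOn τ Ω}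

def Sub.emb (h : M.Sub N) : Emb M N where
  toFun := id
  maps _ ha := h.1 ha
  injOn _ _ _ _ hab := hab
  map_func f x hx := h.2.1 f x hx
  map_rel r x hx := h.2.2 r x hx

theorem Sub.emb_isIso (h : M.Sub N) (hNM : N.carrier ⊆ M.carrier) : h.emb.IsIso :=
  (Set.image_id _).trans (h.1.antisymm hNM)

theorem sub_of_forall_exists_sub {lam : Cardinal.{u}} (hF : ∀ f, #(τ.arF f) ≤ lam)
    (hR : ∀ r, #(τ.arR r) ≤ lam) (hMN : M.carrier ⊆ N.carrier)
    (h : ∀ A ⊆ M.carrier, #A ≤ lam →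
      ∃ P : ModelOn τ Ω, P.Sub M ∧ P.Sub N ∧ A ⊆ P.carrier) :
    M.Sub N := by
  refine ⟨hMN, fun f x hx => ?_, fun r x hx => ?_⟩
  · obtain ⟨P, hPM, hPN, hxP⟩ :=
      h _ (Set.range_subset_iff.2 hx) (mk_range_le.trans (hF f))
    have hxP' : ∀ i, x i ∈ P.carrier := fun i => hxP ⟨i, rfl⟩
    rw [← hPM.2.1 f x hxP', hPN.2.1 f x hxP']
  · obtain ⟨P, hPM, hPN, hxP⟩ :=
      h _ (Set.range_subset_iff.2 hx) (mk_range_le.trans (hR r))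
    have hxP' : ∀ i, x i ∈ P.carrier := fun i => hxP ⟨i, rfl⟩
    rw [← hPM.2.2 r x hxP', hPN.2.2 r x hxP']

end ModelOn

namespace BasicClass

variable {τ : Vocab.{u}} {Ω : Type u} {μ μ' : WithTop Cardinal.{u}} {lam κ : Cardinal.{u}}

theorem aleph0_le_lam (C : BasicClass τ Ω μ lam κ) : ℵ₀ ≤ lam :=
  C.kappa_isRegular.aleph0_le.trans C.kappa_le_lam

variable (C : BasicClass τ Ω μ lam κ) {M N : ModelOn τ Ω} {s : Set (ModelOn τ Ω)}

def lamSubmodels (M : ModelOn τ Ω) : Set (ModelOn τ Ω) :=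
  {P | C.le P M ∧ #P.carrier = lam}

open Classical in
noncomputable def lamHull (M : ModelOn τ Ω) (A : Set Ω) : ModelOn τ Ω :=
  if h : ∃ P ∈ C.lamSubmodels M, A ⊆ P.carrier then h.choose else M

theorem lamHull_spec (hM : C.K M) {A : Set Ω} (hA : A ⊆ M.carrier) (hAlam : #A ≤ lam) :
    C.lamHull M A ∈ C.lamSubmodels M ∧ A ⊆ (C.lamHull M A).carrier := by
  obtain ⟨P, hPM, hPlam, hAP⟩ := C.axVI M hM A hA hAlam
  have h : ∃ P ∈ C.lamSubmodels M, A ⊆ P.carrier := ⟨P, ⟨hPM, hPlam⟩, hAP⟩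
  rw [lamHull, dif_pos h]
  exact h.choose_spec

noncomputable def lamHullOfFamily (M : ModelOn τ Ω) (S : Set (ModelOn τ Ω)) : ModelOn τ Ω :=
  C.lamHull M (⋃ P ∈ S, P.carrier)

theorem lamHullOfFamily_spec (hM : C.K M) {S : Set (ModelOn τ Ω)} (hS : S ⊆ C.lamSubmodels M)
    (hSκ : #S < κ) :
    C.lamHullOfFamily M S ∈ C.lamSubmodels M ∧ ∀ P ∈ S, C.le P (C.lamHullOfFamily M S) := by
  have hcard : #(⋃ P ∈ S, P.carrier) ≤ lam :=
    (mk_biUnion_le _ _).trans <| mul_le_of_le C.aleph0_le_lam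
      (hSκ.le.trans C.kappa_le_lam) (ciSup_le' fun P => (hS P.2).2.le)
  obtain ⟨hmem, hsub⟩ :=
    C.lamHull_spec hM (Set.iUnion₂_subset fun P hP => (C.axI (hS hP).1).1) hcard
  exact ⟨hmem, fun P hP => C.axV (hS hP).1 hmem.1 ((Set.subset_biUnion_of_mem hP).trans hsub)⟩

noncomputable def lamFamily (M : ModelOn τ Ω) (s : Set (ModelOn τ Ω)) : Set (ModelOn τ Ω) :=
  kappaClosure κ (C.lamHullOfFamily M) ((fun a => C.lamHull M {a}) '' M.carrier ∪ s)

theorem lamHull_singleton_spec (hM : C.K M) {a : Ω} (ha : a ∈ M.carrier) :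
    C.lamHull M {a} ∈ C.lamSubmodels M ∧ a ∈ (C.lamHull M {a}).carrier := by
  simpa using C.lamHull_spec hM (Set.singleton_subset_iff.2 ha)
    (by simpa using one_le_aleph0.trans C.aleph0_le_lam)

theorem lamFamily_subset (hM : C.K M) (hs : s ⊆ C.lamSubmodels M) :
    C.lamFamily M s ⊆ C.lamSubmodels M :=
  kappaClosure_subset
    (Set.union_subset (Set.image_subset_iff.2 fun _ ha => (C.lamHull_singleton_spec hM ha).1) hs)
    fun _ hS hSκ => (C.lamHullOfFamily_spec hM hS hSκ).1

theorem sysUnion_lamFamily (hM : C.K M) (hs : s ⊆ C.lamSubmodels M) :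
    sysUnion (Subtype.val : C.lamFamily M s → ModelOn τ Ω) = M.carrier := by
  refine (Set.iUnion_subset fun P => (C.axI (C.lamFamily_subset hM hs P.2).1).1).antisymm
    fun a ha => Set.mem_iUnion.2 ⟨⟨_, ?_⟩, (C.lamHull_singleton_spec hM ha).2⟩
  exact subset_kappaClosure (Or.inl ⟨a, ha, rfl⟩)

theorem kappaDirected_lamFamily (hM : C.K M) (hs : s ⊆ C.lamSubmodels M) :
    KappaDirectedRel κ fun P Q : C.lamFamily M s => C.le P Q := by
  intro T hTκ
  have hT : Subtype.val '' T ⊆ C.lamFamily M s := by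
    rintro _ ⟨P, -, rfl⟩
    exact P.2
  refine ⟨⟨_, apply_mem_kappaClosure C.kappa_isRegular hT (mk_image_le.trans_lt hTκ)⟩,
    fun P hP => ?_⟩
  exact (C.lamHullOfFamily_spec hM (hT.trans (C.lamFamily_subset hM hs))
    (mk_image_le.trans_lt hTκ)).2 P ⟨P, hP, rfl⟩

theorem mk_lamFamily_le (hM : C.K M) (hs : #s ≤ #M.carrier ^< κ) :
    #(C.lamFamily M s) ≤ #M.carrier ^< κ := by
  have hκM : κ ≤ #M.carrier := C.kappa_le_lam.trans (C.size_ge M hM)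
  have hMθ : #M.carrier ≤ #M.carrier ^< κ :=
    self_le_powerlt _ C.kappa_isRegular.one_lt
  refine mk_kappaClosure_le C.kappa_isRegular (hκM.trans hMθ)
    (fun c hc => powerlt_power_le C.kappa_isRegular hκM hc) ?_
  exact (mk_union_le _ _).trans <|
    add_le_of_le ((C.aleph0_le_lam.trans (C.size_ge M hM)).trans hMθ) (mk_image_le.trans hMθ) hs

theorem lamFamily_mono {s' : Set (ModelOn τ Ω)} (h : s ⊆ s') :
    C.lamFamily M s ⊆ C.lamFamily M s' :=
  kappaClosure_mono (Set.union_subset_union_right _ h)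

theorem isPartialOrder_le {S : Set (ModelOn τ Ω)} (hS : ∀ P ∈ S, C.K P) :
    IsPartialOrder S fun P Q => C.le P Q where
  refl P := C.le_refl P (hS P P.2)
  trans _ _ _ := C.le_trans
  antisymm _ _ hPQ hQP := Subtype.ext (C.le_antisymm hPQ hQP)

def AgreeInLam (D : BasicClass τ Ω μ' lam κ) : Prop :=
  (∀ M : ModelOn τ Ω, #M.carrier = lam → (C.K M ↔ D.K M)) ∧
    ∀ M N : ModelOn τ Ω, #M.carrier = lam → #N.carrier = lam → (C.le M N ↔ D.le M N)

namespace AgreeInLam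

variable {C} {D : BasicClass τ Ω μ' lam κ}

theorem symm (h : C.AgreeInLam D) : D.AgreeInLam C :=
  ⟨fun M hM => (h.1 M hM).symm, fun M N hM hN => (h.2 M N hM hN).symm⟩

theorem isSystem_lamFamily (h : C.AgreeInLam D) (hM : C.K M) (hs : s ⊆ C.lamSubmodels M) :
    D.IsSystem (fun P Q : C.lamFamily M s => C.le P Q) Subtype.val := by
  have hsub := C.lamFamily_subset hM hs
  exact ⟨fun P => (h.1 P (hsub P.2).2).1 (C.le_K_left (hsub P.2).1),
    fun P Q hPQ => (h.2 P Q (hsub P.2).2 (hsub Q.2).2).1 hPQ⟩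

theorem existsUnique_union_lamFamily (h : C.AgreeInLam D) (hD : D.AxIIId) (hM : C.K M)
    (hMμ : ((#M.carrier : Cardinal.{u}) : WithTop Cardinal.{u}) < μ')
    (hs : s ⊆ C.lamSubmodels M) (hsM : #s ≤ #M.carrier ^< κ) :
    ∃! N, D.K N ∧ N.carrier = M.carrier ∧ ∀ P ∈ C.lamFamily M s, D.le P N := by
  have hU := C.sysUnion_lamFamily hM hs
  have hI : ((#(C.lamFamily M s) : Cardinal.{u}) : WithTop Cardinal.{u}) < μ' :=
    (WithTop.coe_le_coe.2 (C.mk_lamFamily_le hM hsM)).trans_lt (D.mu_powerlt_closed _ hMμ)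
  obtain ⟨N, ⟨hN, hNM, hPN⟩, huniq⟩ := hD _ _
    (C.isPartialOrder_le fun _ hP => C.le_K_left (C.lamFamily_subset hM hs hP).1)
    (C.kappaDirected_lamFamily hM hs) _ (h.isSystem_lamFamily hM hs) hI (hU ▸ hMμ)
  exact ⟨N, ⟨hN, hNM.trans hU, fun P hP => hPN ⟨P, hP⟩⟩,
    fun N' ⟨hN', hN'M, hPN'⟩ => huniq N' ⟨hN', hN'M.trans hU.symm, fun P => hPN' P P.2⟩⟩

theorem exists_forall_lamSubmodels_le (h : C.AgreeInLam D) (hD : D.AxIIId) (hM : C.K M)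
    (hMμ : ((#M.carrier : Cardinal.{u}) : WithTop Cardinal.{u}) < μ') :
    ∃ N, D.K N ∧ N.carrier = M.carrier ∧ ∀ P ∈ C.lamSubmodels M, D.le P N := by
  obtain ⟨N, ⟨hN, hNM, -⟩, huniq⟩ :=
    h.existsUnique_union_lamFamily hD hM hMμ (Set.empty_subset _) (by simp)
  refine ⟨N, hN, hNM, fun P hP => ?_⟩
  have h1 : #({P} : Set (ModelOn τ Ω)) ≤ #M.carrier ^< κ := by
    rw [mk_singleton]
    exact one_le_aleph0.trans <| (C.aleph0_le_lam.trans (C.size_ge M hM)).trans <|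
      self_le_powerlt _ C.kappa_isRegular.one_lt
  obtain ⟨N', ⟨hN', hN'M, hPN'⟩, -⟩ :=
    h.existsUnique_union_lamFamily hD hM hMμ (Set.singleton_subset_iff.2 hP) h1
  -- the union of the family seeded by `P` is also the union of the unseeded one
  obtain rfl :=
    huniq N' ⟨hN', hN'M, fun Q hQ => hPN' Q (C.lamFamily_mono (Set.empty_subset _) hQ)⟩
  exact hPN' P (subset_kappaClosure (Or.inr rfl))

theorem K_and_forall_lamSubmodels_le (h : C.AgreeInLam D) (hD : D.AxIIId) (hM : C.K M)
    (hMμ : ((#M.carrier : Cardinal.{u}) : WithTop Cardinal.{u}) < μ') :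
    D.K M ∧ ∀ P ∈ C.lamSubmodels M, D.le P M := by
  obtain ⟨N, hN, hNM, hPN⟩ := h.exists_forall_lamSubmodels_le hD hM hMμ
  -- `N` and `M` differ at most by the values of their symbols outside their common universe
  have hsub : N.Sub M := by
    refine ModelOn.sub_of_forall_exists_sub C.arity_func_le C.arity_rel_le hNM.subset
      fun A hA hAlam => ?_
    obtain ⟨hP, hAP⟩ := C.lamHull_spec hM (hNM ▸ hA) hAlam
    exact ⟨_, D.axI (hPN _ hP), C.axI hP.1, hAP⟩
  have hiso := hsub.emb_isIso hNM.symm.subset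
  exact ⟨D.K_isoClosed ⟨_, hiso⟩ hN, fun P hP =>
    D.le_isoClosed _ hiso (D.axI (hPN P hP)) (C.axI hP.1) (Set.image_id _) (hPN P hP)⟩

theorem le_of_le (h : C.AgreeInLam D) (hD₃ : D.AxIIId) (hD₄ : D.AxIVd) (hMN : C.le M N)
    (hMμ : ((#M.carrier : Cardinal.{u}) : WithTop Cardinal.{u}) < μ')
    (hNμ : ((#N.carrier : Cardinal.{u}) : WithTop Cardinal.{u}) < μ') : D.le M N := by
  have hM := C.le_K_left hMN
  have hs : (∅ : Set (ModelOn τ Ω)) ⊆ C.lamSubmodels M := Set.empty_subset _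
  have hsub := C.lamFamily_subset hM hs
  obtain ⟨hDM, hPM⟩ := h.K_and_forall_lamSubmodels_le hD₃ hM hMμ
  obtain ⟨hDN, hPN⟩ := h.K_and_forall_lamSubmodels_le hD₃ (C.le_K_right hMN) hNμ
  exact hD₄ _ _ (C.isPartialOrder_le fun _ hP => C.le_K_left (hsub hP).1)
    (C.kappaDirected_lamFamily hM hs) _ (h.isSystem_lamFamily hM hs) M hDM
    (fun P => hPM P (hsub P.2)) (C.sysUnion_lamFamily hM hs).symm N hDN
    fun P => hPN P ⟨C.le_trans (hsub P.2).1 hMN, (hsub P.2).2⟩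

end AgreeInLam

end BasicClass

/-- Theorem 1.13 (Sh1238), uniqueness of the lifting: two DAECs (with
Ax III(d), Ax IV(d)) agreeing in cardinality `λ` agree below `μ₁`. -/
theorem uniqueness_of_lifting
    {τ : Vocab.{u}} {Ω : Type u} {μ₁ μ₂ : WithTop Cardinal.{u}} {lam κ : Cardinal.{u}}
    (C₁ : BasicClass τ Ω μ₁ lam κ) (C₂ : BasicClass τ Ω μ₂ lam κ)
    (hμ : μ₁ ≤ μ₂)
    (hd₁ : C₁.AxIIIa ∧ C₁.AxIVa ∧ C₁.AxIIIb ∧ C₁.AxIVb ∧ C₁.AxIIId ∧ C₁.AxIVd)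
    (hd₂ : C₂.AxIIIa ∧ C₂.AxIVa ∧ C₂.AxIIIb ∧ C₂.AxIVb ∧ C₂.AxIIId ∧ C₂.AxIVd)
    (hK : ∀ M : ModelOn τ Ω, #M.carrier = lam → (C₁.K M ↔ C₂.K M))
    (hle : ∀ M N : ModelOn τ Ω, #M.carrier = lam → #N.carrier = lam →
      (C₁.le M N ↔ C₂.le M N)) :
    (∀ M : ModelOn τ Ω,
      C₁.K M ↔ (C₂.K M ∧ ((#M.carrier : Cardinal.{u}) : WithTop Cardinal.{u}) < μ₁)) ∧
    (∀ M N : ModelOn τ Ω,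
      C₁.le M N ↔ (C₂.le M N ∧
        ((#M.carrier : Cardinal.{u}) : WithTop Cardinal.{u}) < μ₁ ∧
        ((#N.carrier : Cardinal.{u}) : WithTop Cardinal.{u}) < μ₁)) := by
  obtain ⟨-, -, -, -, h₁III, h₁IV⟩ := hd₁
  obtain ⟨-, -, -, -, h₂III, h₂IV⟩ := hd₂
  have h : C₁.AgreeInLam C₂ := ⟨hK, hle⟩
  refine ⟨fun M => ⟨fun hM => ?_, fun ⟨hM, hMμ⟩ => ?_⟩,
    fun M N => ⟨fun hMN => ?_, fun ⟨hMN, hMμ, hNμ⟩ => ?_⟩⟩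
  · have hMμ := C₁.size_lt M hM
    exact ⟨(h.K_and_forall_lamSubmodels_le h₂III hM (hMμ.trans_le hμ)).1, hMμ⟩
  · exact (h.symm.K_and_forall_lamSubmodels_le h₁III hM hMμ).1
  · have hMμ := C₁.size_lt M (C₁.le_K_left hMN)
    have hNμ := C₁.size_lt N (C₁.le_K_right hMN)
    exact ⟨h.le_of_le h₂III h₂IV hMN (hMμ.trans_le hμ) (hNμ.trans_le hμ), hMμ, hNμ⟩
  · exact h.symm.le_of_le h₁III h₁IV hMN hMμ hNμ
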